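/- arXiv:0903.4081 — 2 statements merged into one kernel-verified Lean document; each statement's English description precedes it below -/
import Mathlib

section
/- Let $r: U \to \mathbb{R}$ be a $C^2$ function on an open set $U \subset \mathbb{C}^n$ whose complex Hessian is positive definite (strict plurisubharmonicity), and define the Levi polynomial $F(\zeta,z) = \sum_j \partial_{\zeta_j} r(\zeta)(\zeta_j - z_j) - \frac12 \sum_{j,k} \partial_{\zeta_j}\partial_{\zeta_k} r(\zeta)(\zeta_j - z_j)(\zeta_k - z_k)$ and $\phi(\zeta,z) = F(\zeta,z) - r(\zeta)$. Then for $\zeta, z$ in a compact subset with $r(\zeta) \le 0$ and $r(z) \le 0$ and $|\zeta - z|$ sufficiently small, $|\phi(\zeta,z)| \ge c\big( -r(\zeta) - r(z) + |\zeta - z|^2 + |\operatorname{Im} \phi(\zeta,z)| \big)$ for some constant $c > 0$. -/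
open scoped ComplexConjugate

/-- The Wirtinger derivative `∂f/∂ζ_j` of a (real-differentiable) function
`f : ℂⁿ → ℂ`, namely `(1/2)(∂f/∂x_j - i ∂f/∂y_j)`. -/
noncomputable def wirtD (n : ℕ) (f : EuclideanSpace ℂ (Fin n) → ℂ)
    (ζ : EuclideanSpace ℂ (Fin n)) (j : Fin n) : ℂ :=
  (1 / 2 : ℂ) * (fderiv ℝ f ζ (EuclideanSpace.single j 1) -
    Complex.I * fderiv ℝ f ζ (EuclideanSpace.single j Complex.I))

/-- The conjugate Wirtinger derivative `∂f/∂ζ̄_j = (1/2)(∂f/∂x_j + i ∂f/∂y_j)`. -/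
noncomputable def wirtDBar (n : ℕ) (f : EuclideanSpace ℂ (Fin n) → ℂ)
    (ζ : EuclideanSpace ℂ (Fin n)) (j : Fin n) : ℂ :=
  (1 / 2 : ℂ) * (fderiv ℝ f ζ (EuclideanSpace.single j 1) +
    Complex.I * fderiv ℝ f ζ (EuclideanSpace.single j Complex.I))

/-- The Levi polynomial of `r` at `ζ`:
`F(ζ,z) = ∑_j ∂r/∂ζ_j(ζ)(ζ_j-z_j) - (1/2)∑_{j,k} ∂²r/∂ζ_j∂ζ_k(ζ)(ζ_j-z_j)(ζ_k-z_k)`. -/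
noncomputable def leviPoly (n : ℕ) (r : EuclideanSpace ℂ (Fin n) → ℝ)
    (ζ z : EuclideanSpace ℂ (Fin n)) : ℂ :=
  (∑ j, wirtD n (fun w => (r w : ℂ)) ζ j * (ζ j - z j)) -
    (1 / 2 : ℂ) * ∑ j, ∑ k,
      wirtD n (fun w => wirtD n (fun w' => (r w' : ℂ)) w k) ζ j * (ζ j - z j) * (ζ k - z k)

/-!
With `h = ζ - z`, the Wirtinger sums defining `F` regroup, in the real coordinates of `ℂⁿ`, into
`2 Re F(ζ,z) = Dr(ζ)h - ½ D²r(ζ)(h,h) + L_ζ(h)`, where `L_ζ` is the Levi form. A second-order Taylor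
expansion of `r` at `ζ`, with the oscillation of `D²r` kept below `c/2` uniformly near the compact
set (Heine–Cantor), turns this into `2 Re F(ζ,z) ≥ r(ζ) - r(z) + (c/2)|h|²`. Hence
`2 Re φ ≥ -r(ζ) - r(z) + (c/2)|h|²` on `{r ≤ 0}`, and `|φ|` dominates both `Re φ` and `|Im φ|`.
-/

open Metric

local notation "𝐞" j:max => EuclideanSpace.single j (1 : ℂ)
local notation "𝐢𝐞" j:max => EuclideanSpace.single j Complex.I

section Taylor

variable {E F : Type*} [NormedAddCommGroup E] [NormedSpace ℝ E] [NormedAddCommGroup F]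
  [NormedSpace ℝ F] {f : E → F} {U : Set E} {x y : E} {η : ℝ}

theorem norm_sub_taylor_two_le (hU : IsOpen U) (hf : ContDiffOn ℝ 2 f U)
    (hball : closedBall x ‖y - x‖ ⊆ U)
    (hosc : ∀ w ∈ closedBall x ‖y - x‖,
      ‖fderiv ℝ (fderiv ℝ f) w - fderiv ℝ (fderiv ℝ f) x‖ ≤ η) :
    ‖f y - f x - fderiv ℝ f x (y - x) - (1 / 2 : ℝ) • fderiv ℝ (fderiv ℝ f) x (y - x) (y - x)‖
      ≤ η * ‖y - x‖ ^ 2 := by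
  set B := closedBall x ‖y - x‖
  set A := fderiv ℝ (fderiv ℝ f) x
  have hxB : x ∈ B := mem_closedBall_self (norm_nonneg _)
  have hη : 0 ≤ η := (norm_nonneg (A - A)).trans (hosc x hxB)
  have hyB : y ∈ B := by simp [B, dist_eq_norm]
  have hf' : ∀ w ∈ B, HasFDerivAt f (fderiv ℝ f w) w := fun w hw =>
    ((hf.contDiffAt (hU.mem_nhds (hball hw))).differentiableAt (by norm_num)).hasFDerivAt
  have hf'' : ∀ w ∈ B, HasFDerivAt (fderiv ℝ f) (fderiv ℝ (fderiv ℝ f) w) w := fun w hw =>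
    (((hf.contDiffAt (hU.mem_nhds (hball hw))).fderiv_right (m := 1) le_rfl).differentiableAt
      (by norm_num)).hasFDerivAt
  have hsymm : ∀ u v, A u v = A v u :=
    (hf.contDiffAt (hU.mem_nhds (hball hxB))).isSymmSndFDerivAt (by simp)
  have hlin : ∀ w ∈ B, ‖fderiv ℝ f w - fderiv ℝ f x - A (w - x)‖ ≤ η * ‖y - x‖ := by
    intro w hw
    refine ((convex_closedBall x _).norm_image_sub_le_of_norm_hasFDerivWithin_le'
      (fun u hu => (hf'' u hu).hasFDerivWithinAt) hosc hxB hw).trans ?_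
    exact mul_le_mul_of_nonneg_left (by simpa [B, dist_eq_norm] using hw) hη
  have hquad : ∀ w, HasFDerivAt (fun v => (1 / 2 : ℝ) • A (v - x) (v - x)) (A (w - x)) w := by
    intro w
    have hsub : HasFDerivAt (fun v : E => v - x) (ContinuousLinearMap.id ℝ E) w :=
      (hasFDerivAt_id w).sub_const x
    have hA : HasFDerivAt (fun v => A (v - x)) A w :=
      (A.hasFDerivAt.comp w hsub).congr_fderiv (A.comp_id)
    refine ((hA.clm_apply hsub).const_smul (1 / 2 : ℝ)).congr_fderiv ?_
    ext v
    simp only [FunLike.coe_smul, FunLike.coe_add, Pi.smul_apply,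
      Pi.add_apply, ContinuousLinearMap.comp_apply, ContinuousLinearMap.id_apply,
      ContinuousLinearMap.flip_apply, hsymm v (w - x)]
    module
  have hderiv : ∀ w ∈ B, HasFDerivWithinAt
      (fun v => f v - fderiv ℝ f x (v - x) - (1 / 2 : ℝ) • A (v - x) (v - x))
      (fderiv ℝ f w - fderiv ℝ f x - A (w - x)) B w := by
    intro w hw
    have hlin' : HasFDerivAt (fun v => fderiv ℝ f x (v - x)) (fderiv ℝ f x) w :=
      ((fderiv ℝ f x).hasFDerivAt.comp w ((hasFDerivAt_id w).sub_const x)).congr_fderiv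
        ((fderiv ℝ f x).comp_id)
    exact (((hf' w hw).sub hlin').sub (hquad w)).hasFDerivWithinAt
  have := (convex_closedBall x _).norm_image_sub_le_of_norm_hasFDerivWithin_le hderiv hlin hxB hyB
  simp only [sub_self, map_zero, smul_zero, sub_zero] at this
  rw [sq, ← mul_assoc]
  convert this using 2
  abel

end Taylor

theorem IsCompact.exists_pos_forall_closedBall_subset_dist_le {α β : Type*} [PseudoMetricSpace α]
    [PseudoMetricSpace β] {K U : Set α} {g : α → β} (hK : IsCompact K) (hU : IsOpen U)
    (hKU : K ⊆ U) (hg : ContinuousOn g U) {ε : ℝ} (hε : 0 < ε) :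
    ∃ δ > 0, ∀ x ∈ K, closedBall x δ ⊆ U ∧ ∀ y ∈ closedBall x δ, dist (g y) (g x) ≤ ε := by
  obtain ⟨δ₁, hδ₁, hδ₁U⟩ := hK.exists_cthickening_subset_open hU hKU
  obtain ⟨δ₂, hδ₂, hδ₂g⟩ := Metric.mem_uniformity_dist.1 <|
    hK.uniformContinuousAt_of_continuousAt g (fun a ha => hg.continuousAt (hU.mem_nhds (hKU ha)))
      (Metric.dist_mem_uniformity hε)
  refine ⟨min δ₁ (δ₂ / 2), by positivity, fun x hx => ⟨?_, fun y hy => ?_⟩⟩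
  · exact (closedBall_subset_closedBall (min_le_left _ _)).trans
      ((closedBall_subset_cthickening hx _).trans hδ₁U)
  · have hxy : dist x y < δ₂ := by
      rw [dist_comm]
      linarith [mem_closedBall.1 hy, min_le_right δ₁ (δ₂ / 2)]
    rw [dist_comm]
    exact (hδ₂g hxy hx).le

section Coordinates

variable {n : ℕ}

theorem EuclideanSpace.eq_sum_re_smul_single_add_im_smul_single (h : EuclideanSpace ℂ (Fin n)) :
    h = ∑ j, ((h j).re • 𝐞 j + (h j).im • 𝐢𝐞 j) := by
  ext m
  simp [Pi.single_apply, Complex.ext_iff, apply_ite Complex.re, apply_ite Complex.im]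

theorem ContinuousLinearMap.apply_eq_sum_re_im (T : EuclideanSpace ℂ (Fin n) →L[ℝ] ℝ)
    (h : EuclideanSpace ℂ (Fin n)) :
    T h = ∑ j, ((h j).re * T (𝐞 j) + (h j).im * T (𝐢𝐞 j)) := by
  conv_lhs => rw [EuclideanSpace.eq_sum_re_smul_single_add_im_smul_single h]
  simp

theorem ContinuousLinearMap.apply_apply_eq_sum_re_im
    (A : EuclideanSpace ℂ (Fin n) →L[ℝ] EuclideanSpace ℂ (Fin n) →L[ℝ] ℝ)
    (h : EuclideanSpace ℂ (Fin n)) :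
    A h h = ∑ j, ∑ k,
      ((h j).re * (h k).re * A (𝐞 j) (𝐞 k)
        + (h j).re * (h k).im * A (𝐞 j) (𝐢𝐞 k)
        + (h j).im * (h k).re * A (𝐢𝐞 j) (𝐞 k)
        + (h j).im * (h k).im * A (𝐢𝐞 j) (𝐢𝐞 k)) := by
  rw [(A h).apply_eq_sum_re_im, Finset.sum_comm]
  refine Finset.sum_congr rfl fun k _ => ?_
  rw [← A.flip_apply, ← A.flip_apply, (A.flip _).apply_eq_sum_re_im h,
    (A.flip _).apply_eq_sum_re_im h, Finset.mul_sum, Finset.mul_sum, ← Finset.sum_add_distrib]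
  refine Finset.sum_congr rfl fun j _ => ?_
  simp only [ContinuousLinearMap.flip_apply]
  ring

theorem ContinuousLinearMap.two_mul_re_sum_wirtinger (T : EuclideanSpace ℂ (Fin n) →L[ℝ] ℝ)
    (h : EuclideanSpace ℂ (Fin n)) :
    2 * (∑ j, (1 / 2 : ℂ) * ((T (𝐞 j) : ℂ)
      - Complex.I * (T (𝐢𝐞 j) : ℂ)) * h j).re = T h := by
  rw [T.apply_eq_sum_re_im, Complex.re_sum, Finset.mul_sum]
  refine Finset.sum_congr rfl fun j _ => ?_
  simp only [Complex.mul_re, Complex.mul_im, Complex.sub_re, Complex.sub_im, Complex.ofReal_re,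
    Complex.ofReal_im, Complex.I_re, Complex.I_im, Complex.div_ofNat_re, Complex.div_ofNat_im,
    Complex.one_re, Complex.one_im]
  ring

theorem ContinuousLinearMap.apply_apply_eq_two_mul_re_sum_wirtinger
    (A : EuclideanSpace ℂ (Fin n) →L[ℝ] EuclideanSpace ℂ (Fin n) →L[ℝ] ℝ)
    (h : EuclideanSpace ℂ (Fin n)) :
    A h h = 2 * (∑ j, ∑ k, (1 / 4 : ℂ) *
        ((A (𝐞 j) (𝐞 k) : ℂ)
          - Complex.I * (A (𝐞 j) (𝐢𝐞 k) : ℂ)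
          - Complex.I * (A (𝐢𝐞 j) (𝐞 k) : ℂ)
          - (A (𝐢𝐞 j) (𝐢𝐞 k) : ℂ))
        * h j * h k).re
      + 2 * (∑ j, ∑ k, (1 / 4 : ℂ) *
        ((A (𝐞 j) (𝐞 k) : ℂ)
          + Complex.I * (A (𝐞 j) (𝐢𝐞 k) : ℂ)
          - Complex.I * (A (𝐢𝐞 j) (𝐞 k) : ℂ)
          + (A (𝐢𝐞 j) (𝐢𝐞 k) : ℂ))
        * h j * conj (h k)).re := by
  rw [A.apply_apply_eq_sum_re_im]
  simp only [Complex.re_sum, Finset.mul_sum, ← Finset.sum_add_distrib]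
  refine Finset.sum_congr rfl fun j _ => Finset.sum_congr rfl fun k _ => ?_
  simp only [Complex.mul_re, Complex.mul_im, Complex.sub_re, Complex.sub_im, Complex.add_re,
    Complex.add_im, Complex.ofReal_re, Complex.ofReal_im, Complex.I_re, Complex.I_im,
    Complex.div_ofNat_re, Complex.div_ofNat_im, Complex.one_re, Complex.one_im, Complex.conj_re,
    Complex.conj_im]
  ring

end Coordinates

section Wirtinger

theorem fderiv_ofReal_comp_apply {E : Type*} [NormedAddCommGroup E] [NormedSpace ℝ E]
    {r : E → ℝ} {x : E} (hr : DifferentiableAt ℝ r x) (v : E) :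
    fderiv ℝ (fun w => (r w : ℂ)) x v = fderiv ℝ r x v := by
  have h : HasFDerivAt (fun w => (r w : ℂ)) (Complex.ofRealCLM.comp (fderiv ℝ r x)) x :=
    Complex.ofRealCLM.hasFDerivAt.comp x hr.hasFDerivAt
  rw [h.fderiv]
  rfl

theorem hasFDerivAt_ofReal_fderiv_apply {E : Type*} [NormedAddCommGroup E] [NormedSpace ℝ E]
    {r : E → ℝ} {x : E} (hr : DifferentiableAt ℝ (fderiv ℝ r) x) (u : E) :
    HasFDerivAt (fun w => (fderiv ℝ r w u : ℂ))
      (Complex.ofRealCLM.comp ((fderiv ℝ (fderiv ℝ r) x).flip u)) x :=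
  Complex.ofRealCLM.hasFDerivAt.comp x <|
    ((ContinuousLinearMap.apply ℝ ℝ u).hasFDerivAt.comp x hr.hasFDerivAt).congr_fderiv (by ext; rfl)

theorem ContDiffAt.eventually_differentiableAt_and_differentiableAt_fderiv {E : Type*}
    [NormedAddCommGroup E] [NormedSpace ℝ E] {r : E → ℝ} {x : E} (hr : ContDiffAt ℝ 2 r x) :
    (∀ᶠ w in nhds x, DifferentiableAt ℝ r w) ∧ DifferentiableAt ℝ (fderiv ℝ r) x :=
  ⟨(hr.eventually (by simp)).mono fun _ hw => hw.differentiableAt (by norm_num),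
    (hr.fderiv_right (m := 1) le_rfl).differentiableAt (by norm_num)⟩

variable {n : ℕ} {r : EuclideanSpace ℂ (Fin n) → ℝ} {ζ : EuclideanSpace ℂ (Fin n)}

theorem wirtD_ofReal (hr : DifferentiableAt ℝ r ζ) (k : Fin n) :
    wirtD n (fun w => (r w : ℂ)) ζ k = (1 / 2 : ℂ) * ((fderiv ℝ r ζ (𝐞 k) : ℂ)
      - Complex.I * (fderiv ℝ r ζ (𝐢𝐞 k) : ℂ)) := by
  rw [wirtD, fderiv_ofReal_comp_apply hr, fderiv_ofReal_comp_apply hr]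

theorem wirtDBar_ofReal (hr : DifferentiableAt ℝ r ζ) (k : Fin n) :
    wirtDBar n (fun w => (r w : ℂ)) ζ k = (1 / 2 : ℂ) * ((fderiv ℝ r ζ (𝐞 k) : ℂ)
      + Complex.I * (fderiv ℝ r ζ (𝐢𝐞 k) : ℂ)) := by
  rw [wirtDBar, fderiv_ofReal_comp_apply hr, fderiv_ofReal_comp_apply hr]

theorem wirtD_wirtD_ofReal (hr : ContDiffAt ℝ 2 r ζ) (j k : Fin n) :
    wirtD n (fun w => wirtD n (fun w' => (r w' : ℂ)) w k) ζ j = (1 / 4 : ℂ) *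
      ((fderiv ℝ (fderiv ℝ r) ζ (𝐞 j) (𝐞 k) : ℂ)
        - Complex.I * (fderiv ℝ (fderiv ℝ r) ζ (𝐞 j) (𝐢𝐞 k) : ℂ)
        - Complex.I * (fderiv ℝ (fderiv ℝ r) ζ (𝐢𝐞 j) (𝐞 k) : ℂ)
        - (fderiv ℝ (fderiv ℝ r) ζ (𝐢𝐞 j) (𝐢𝐞 k) : ℂ)) := by
  obtain ⟨hD1, hD2⟩ := hr.eventually_differentiableAt_and_differentiableAt_fderiv
  have hg := (((hasFDerivAt_ofReal_fderiv_apply hD2 _).sub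
    ((hasFDerivAt_ofReal_fderiv_apply hD2 _).const_mul Complex.I)).const_mul
      (1 / 2 : ℂ)).congr_of_eventuallyEq (hD1.mono fun w hw => wirtD_ofReal hw k)
  rw [wirtD, hg.fderiv]
  simp only [smul_apply, sub_apply, ContinuousLinearMap.comp_apply,
    ContinuousLinearMap.flip_apply, Complex.ofRealCLM_apply, smul_eq_mul]
  linear_combination (1 / 4 : ℂ) * (fderiv ℝ (fderiv ℝ r) ζ (𝐢𝐞 j) (𝐢𝐞 k) : ℂ) * Complex.I_sq

theorem wirtD_wirtDBar_ofReal (hr : ContDiffAt ℝ 2 r ζ) (j k : Fin n) :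
    wirtD n (fun w => wirtDBar n (fun w' => (r w' : ℂ)) w k) ζ j = (1 / 4 : ℂ) *
      ((fderiv ℝ (fderiv ℝ r) ζ (𝐞 j) (𝐞 k) : ℂ)
        + Complex.I * (fderiv ℝ (fderiv ℝ r) ζ (𝐞 j) (𝐢𝐞 k) : ℂ)
        - Complex.I * (fderiv ℝ (fderiv ℝ r) ζ (𝐢𝐞 j) (𝐞 k) : ℂ)
        + (fderiv ℝ (fderiv ℝ r) ζ (𝐢𝐞 j) (𝐢𝐞 k) : ℂ)) := by
  obtain ⟨hD1, hD2⟩ := hr.eventually_differentiableAt_and_differentiableAt_fderiv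
  have hg := (((hasFDerivAt_ofReal_fderiv_apply hD2 _).add
    ((hasFDerivAt_ofReal_fderiv_apply hD2 _).const_mul Complex.I)).const_mul
      (1 / 2 : ℂ)).congr_of_eventuallyEq (hD1.mono fun w hw => wirtDBar_ofReal hw k)
  rw [wirtD, hg.fderiv]
  simp only [smul_add, add_apply, smul_apply, ContinuousLinearMap.comp_apply,
    ContinuousLinearMap.flip_apply, Complex.ofRealCLM_apply, smul_eq_mul]
  linear_combination (-1 / 4 : ℂ) * (fderiv ℝ (fderiv ℝ r) ζ (𝐢𝐞 j) (𝐢𝐞 k) : ℂ) * Complex.I_sq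

end Wirtinger

noncomputable def leviForm (n : ℕ) (r : EuclideanSpace ℂ (Fin n) → ℝ)
    (ζ : EuclideanSpace ℂ (Fin n)) (w : Fin n → ℂ) : ℂ :=
  ∑ j, ∑ k, wirtD n (fun w' => wirtDBar n (fun w'' => (r w'' : ℂ)) w' k) ζ j * w j * conj (w k)

section Levi

variable {n : ℕ} {r : EuclideanSpace ℂ (Fin n) → ℝ} {ζ : EuclideanSpace ℂ (Fin n)}

theorem two_mul_re_leviPoly (hr : ContDiffAt ℝ 2 r ζ) (z : EuclideanSpace ℂ (Fin n)) :
    2 * (leviPoly n r ζ z).re = fderiv ℝ r ζ (ζ - z)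
      - 1 / 2 * fderiv ℝ (fderiv ℝ r) ζ (ζ - z) (ζ - z) + (leviForm n r ζ (ζ - z)).re := by
  have hlin := (fderiv ℝ r ζ).two_mul_re_sum_wirtinger (ζ - z)
  have hquad := (fderiv ℝ (fderiv ℝ r) ζ).apply_apply_eq_two_mul_re_sum_wirtinger (ζ - z)
  simp only [← wirtD_ofReal (hr.differentiableAt (by norm_num)), ← wirtD_wirtD_ofReal hr,
    ← wirtD_wirtDBar_ofReal hr, PiLp.sub_apply] at hlin hquad
  have hhalf (w : ℂ) : ((1 / 2 : ℂ) * w).re = 1 / 2 * w.re := by simp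
  rw [leviPoly, leviForm, Complex.sub_re, hhalf]
  simp only [Pi.sub_apply]
  linarith

theorem le_two_mul_re_leviPoly {U : Set (EuclideanSpace ℂ (Fin n))} {z : EuclideanSpace ℂ (Fin n)}
    {η : ℝ} (hU : IsOpen U) (hr : ContDiffOn ℝ 2 r U) (hball : closedBall ζ ‖z - ζ‖ ⊆ U)
    (hosc : ∀ w ∈ closedBall ζ ‖z - ζ‖,
      ‖fderiv ℝ (fderiv ℝ r) w - fderiv ℝ (fderiv ℝ r) ζ‖ ≤ η) :
    r ζ - r z + (leviForm n r ζ (ζ - z)).re - η * ‖ζ - z‖ ^ 2 ≤ 2 * (leviPoly n r ζ z).re := by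
  have hζ : ζ ∈ U := hball (mem_closedBall_self (norm_nonneg _))
  have htaylor := abs_le.1 (norm_sub_taylor_two_le hU hr hball hosc)
  rw [← neg_sub ζ z] at htaylor
  simp only [map_neg, neg_apply, neg_neg, norm_neg, smul_eq_mul] at htaylor
  rw [two_mul_re_leviPoly (hr.contDiffAt (hU.mem_nhds hζ))]
  linarith

end Levi

/-- The estimate (proof of Lemma 2.1): for a `C²` strictly plurisubharmonic function `r`,
with `φ(ζ,z) = F(ζ,z) - r(ζ)` the modified Levi polynomial, one has
`|φ| ≥ c(-r(ζ) - r(z) + |ζ-z|² + |Im φ|)` on compact subsets, for `ζ, z` in the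
closed sublevel set `{r ≤ 0}` with `|ζ-z|` small. -/
theorem stmt_8 (n : ℕ) (U : Set (EuclideanSpace ℂ (Fin n))) (hU : IsOpen U)
    (r : EuclideanSpace ℂ (Fin n) → ℝ) (hr : ContDiffOn ℝ 2 r U)
    (hpsh : ∃ c : ℝ, 0 < c ∧ ∀ ζ ∈ U, ∀ w : Fin n → ℂ,
      c * ∑ j, ‖w j‖ ^ 2 ≤
        (∑ j, ∑ k,
          wirtD n (fun w' => wirtDBar n (fun w'' => (r w'' : ℂ)) w' k) ζ j *
            w j * conj (w k)).re)
    (φ : EuclideanSpace ℂ (Fin n) → EuclideanSpace ℂ (Fin n) → ℂ)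
    (hφ : ∀ ζ z, φ ζ z = leviPoly n r ζ z - (r ζ : ℂ)) :
    ∀ K : Set (EuclideanSpace ℂ (Fin n)), IsCompact K → K ⊆ U →
      ∃ c : ℝ, 0 < c ∧ ∃ δ : ℝ, 0 < δ ∧
        ∀ ζ ∈ K, ∀ z ∈ K, r ζ ≤ 0 → r z ≤ 0 → ‖ζ - z‖ < δ →
          c * (-r ζ - r z + ‖ζ - z‖ ^ 2 + |(φ ζ z).im|) ≤ ‖φ ζ z‖ := by
  obtain ⟨c, hc, hLevi⟩ := hpsh
  intro K hK hKU
  have hcont : ContinuousOn (fderiv ℝ (fderiv ℝ r)) U :=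
    (hr.fderiv_of_isOpen hU (by norm_num)).continuousOn_fderiv_of_isOpen hU le_rfl
  obtain ⟨δ, hδ, hδK⟩ :=
    hK.exists_pos_forall_closedBall_subset_dist_le
      (β := EuclideanSpace ℂ (Fin n) →L[ℝ] EuclideanSpace ℂ (Fin n) →L[ℝ] ℝ) hU hKU hcont
      (half_pos hc)
  refine ⟨min 1 (c / 2) / 3, by positivity, δ, hδ, fun ζ hζ z _ hrζ hrz hζz => ?_⟩
  obtain ⟨hball, hosc⟩ := hδK ζ hζ
  have hsub : closedBall ζ ‖z - ζ‖ ⊆ closedBall ζ δ :=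
    closedBall_subset_closedBall (by rw [norm_sub_rev]; exact hζz.le)
  have hF := le_two_mul_re_leviPoly hU hr (hsub.trans hball)
    fun w hw => (dist_eq_norm (fderiv ℝ (fderiv ℝ r) w) _).symm.trans_le (hosc w (hsub hw))
  have hL : c * ‖ζ - z‖ ^ 2 ≤ (leviForm n r ζ (ζ - z)).re := by
    rw [EuclideanSpace.norm_sq_eq]
    exact hLevi ζ (hKU hζ) _
  have hφre : -r ζ - r z + c / 2 * ‖ζ - z‖ ^ 2 ≤ 2 * (φ ζ z).re := by
    rw [hφ, Complex.sub_re, Complex.ofReal_re]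
    linarith
  have hm1 := min_le_left 1 (c / 2)
  have hm2 := min_le_right 1 (c / 2)
  have hA : 0 ≤ -r ζ - r z := by linarith
  calc min 1 (c / 2) / 3 * (-r ζ - r z + ‖ζ - z‖ ^ 2 + |(φ ζ z).im|)
      ≤ (-r ζ - r z + c / 2 * ‖ζ - z‖ ^ 2 + |(φ ζ z).im|) / 3 := by
        nlinarith [mul_le_mul_of_nonneg_right hm1 hA,
          mul_le_mul_of_nonneg_right hm2 (sq_nonneg ‖ζ - z‖),
          mul_le_mul_of_nonneg_right hm1 (abs_nonneg (φ ζ z).im)]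
    _ ≤ (2 * ‖φ ζ z‖ + ‖φ ζ z‖) / 3 := by
        linarith [Complex.re_le_norm (φ ζ z), Complex.abs_im_le_norm (φ ζ z)]
    _ = ‖φ ζ z‖ := by ring
end

section
/- Let $\gamma, \gamma^* > 0$ and $\phi, \phi^*, \bar\phi, \bar\phi^*$ be complex numbers with $\bar\phi = \overline{\phi}$, $\bar\phi^* = \overline{\phi^*}$, $|\phi - \phi^*| \le E_3$, and suppose $|\gamma - \gamma^*| \le E_1$ with $E_1/\gamma^*$ and $E_1/\gamma$ bounded by $B|\zeta - z|$. Then $\left| \frac{\gamma}{\gamma^*} \frac{\phi^*}{\bar\phi} - \frac{\gamma^*}{\gamma} \frac{\phi}{\bar\phi^*} \right| \le \frac{|\phi|\,E_3 + |\bar\phi^*|\,E_3}{|\bar\phi|\,|\bar\phi^*|} + B|\zeta-z|\left( \frac{|\phi^*|}{|\bar\phi|} + \frac{|\phi|}{|\bar\phi^*|} \right)$. -/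
open scoped ComplexConjugate

/-! Writing `γ/γ* = 1 + (γ - γ*)/γ*` and `γ*/γ = 1 - (γ - γ*)/γ` splits the expression into the
unscaled difference `φ*/φ̄ - φ/φ̄*` plus two terms of relative size `|γ - γ*|/γ*` and `|γ - γ*|/γ`.
The unscaled difference is controlled by `|φ - φ*|` because conjugation is an isometry. -/

theorem div_mul_sub_div_mul_eq {K : Type*} [Field K] {x y : K} (hx : x ≠ 0) (hy : y ≠ 0) (u v : K) :
    x / y * u - y / x * v = (u - v) + (x - y) / y * u + (x - y) / x * v := by
  field_simp
  ring

theorem RCLike.norm_div_conj_sub_div_conj_le {𝕜 : Type*} [RCLike 𝕜] (a b : 𝕜) :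
    ‖b / conj a - a / conj b‖ ≤ ‖a - b‖ / ‖a‖ + ‖a - b‖ / ‖b‖ := by
  rcases eq_or_ne a 0 with rfl | ha
  · simp only [map_zero, div_zero, zero_div, sub_zero, norm_zero]
    positivity
  rcases eq_or_ne b 0 with rfl | hb
  · simp only [map_zero, div_zero, zero_div, sub_zero, norm_zero]
    positivity
  have ha' : conj a ≠ 0 := by simpa using ha
  have hb' : conj b ≠ 0 := by simpa using hb
  have key : b / conj a - a / conj b = (b - a) / conj a + a * conj (b - a) / (conj a * conj b) := by
    rw [map_sub]
    field_simp
    ring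
  calc ‖b / conj a - a / conj b‖
      ≤ ‖b - a‖ / ‖a‖ + ‖a‖ * ‖b - a‖ / (‖a‖ * ‖b‖) := by
        rw [key]
        refine (norm_add_le _ _).trans_eq ?_
        simp only [norm_div, norm_mul, RCLike.norm_conj]
    _ = ‖a - b‖ / ‖a‖ + ‖a - b‖ / ‖b‖ := by
        rw [norm_sub_rev, mul_div_mul_left _ _ (norm_ne_zero_iff.mpr ha)]

theorem RCLike.norm_ofReal_sub_div_le {𝕜 : Type*} [RCLike 𝕜] {x y z E : ℝ} (hz : 0 < z)
    (h : |x - y| ≤ E) : ‖((x : 𝕜) - y) / z‖ ≤ E / z := by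
  rw [← RCLike.ofReal_sub, norm_div, RCLike.norm_ofReal, RCLike.norm_ofReal, abs_of_pos hz]
  gcongr

/-- The cancellation computation (case23) in Proposition 4.5: with `γ, γ* > 0`,
`φ̄ = conj φ`, `φ̄* = conj φ*`, near-symmetry `|φ - φ*| ≤ E₃`, and
`|γ - γ*| ≤ E₁` with `E₁/γ*` and `E₁/γ` bounded by `B d` (`d = |ζ-z|`), one has
`|γ/γ* ⬝ φ*/φ̄ - γ*/γ ⬝ φ/φ̄*| ≤ (|φ|E₃ + |φ̄*|E₃)/(|φ̄||φ̄*|) + B d (|φ*|/|φ̄| + |φ|/|φ̄*|)`. -/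
theorem stmt_15 (γ γs : ℝ) (hγ : 0 < γ) (hγs : 0 < γs)
    (φ φs bφ bφs : ℂ) (hφ0 : φ ≠ 0) (hφs0 : φs ≠ 0)
    (hbφ : bφ = conj φ) (hbφs : bφs = conj φs)
    (E₃ E₁ B d : ℝ) (hsym : ‖φ - φs‖ ≤ E₃)
    (hγγ : |γ - γs| ≤ E₁) (h1 : E₁ / γs ≤ B * d) (h2 : E₁ / γ ≤ B * d) :
    ‖(γ / γs : ℂ) * (φs / bφ) - (γs / γ : ℂ) * (φ / bφs)‖ ≤
      (‖φ‖ * E₃ + ‖bφs‖ * E₃) / (‖bφ‖ * ‖bφs‖) +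
        B * d * (‖φs‖ / ‖bφ‖ + ‖φ‖ / ‖bφs‖) := by
  have hr₁ : ‖((γ : ℂ) - γs) / γs‖ ≤ B * d := (RCLike.norm_ofReal_sub_div_le hγs hγγ).trans h1
  have hr₂ : ‖((γ : ℂ) - γs) / γ‖ ≤ B * d := (RCLike.norm_ofReal_sub_div_le hγ hγγ).trans h2
  rw [div_mul_sub_div_mul_eq (by exact_mod_cast hγ.ne') (by exact_mod_cast hγs.ne'), hbφ, hbφs]
  have hφ : 0 < ‖φ‖ := norm_pos_iff.mpr hφ0
  have hφs : 0 < ‖φs‖ := norm_pos_iff.mpr hφs0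
  calc _ ≤ ‖φs / conj φ - φ / conj φs‖ + ‖((γ : ℂ) - γs) / γs * (φs / conj φ)‖
        + ‖((γ : ℂ) - γs) / γ * (φ / conj φs)‖ := norm_add₃_le
    _ ≤ (E₃ / ‖φ‖ + E₃ / ‖φs‖) + B * d * (‖φs‖ / ‖φ‖) + B * d * (‖φ‖ / ‖φs‖) := by
        gcongr ?_ + ?_ + ?_
        · exact (RCLike.norm_div_conj_sub_div_conj_le φ φs).trans (by gcongr)
        all_goals rw [norm_mul, norm_div _ (conj _), RCLike.norm_conj]; gcongr
    _ = _ := by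
        simp only [RCLike.norm_conj]
        field_simp
        ring
end
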